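/- Let K be a finite semigroup that is the disjoint union of a subset O containing an element θ and a subset H, such that: (i) x*y = θ for all x ∈ O and all y ∈ K; (ii) h*x = x for all h ∈ H and all x ∈ O; (iii) h*h' ∈ H for all h, h' ∈ H; and (iv) for every h ∈ H, the map H → H sending s to s*h is a bijection. (This is the semigroup OG_n, where O is a null semigroup with zero θ of order n and H is a finite semigroup G whose regular right action on itself is by permutations.) Then a partition 𝒮 of K into nonempty blocks is a Schur ring over K if and only if either (a) every block of 𝒮 is contained in O or contained in H, the singleton {θ} is a block of 𝒮, and the blocks contained in H form a Schur ring over the semigroup H; or (b) {θ} is a block of 𝒮 and there exists a block X ∈ 𝒮 with H ⊆ X. -/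

import Mathlib

open scoped Pointwise

/-- The simple quantity `[X] = ∑_{x ∈ X} x` in the semigroup algebra `MonoidAlgebra ℚ G`. -/
noncomputable def simpleQty {G : Type*} [Mul G] (X : Finset G) : MonoidAlgebra ℚ G :=
  ∑ x ∈ X, MonoidAlgebra.single x (1 : ℚ)

/-- A partition of `G` into nonempty finite blocks. -/
def IsPartition {G : Type*} (S : Set (Set G)) : Prop :=
  (∀ X ∈ S, X.Nonempty ∧ X.Finite) ∧ ∀ x : G, ∃! X, X ∈ S ∧ x ∈ X

/-- The ℚ-linear span of the simple quantities of the blocks of `S`. -/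
noncomputable def schurSpan {G : Type*} [Mul G] (S : Set (Set G)) :
    Submodule ℚ (MonoidAlgebra ℚ G) :=
  Submodule.span ℚ { z | ∃ X ∈ S, ∃ hX : X.Finite, z = simpleQty hX.toFinset }

/-- A Schur ring over the semigroup `G`. -/
def IsSchurRing {G : Type*} [Semigroup G] (S : Set (Set G)) : Prop :=
  IsPartition S ∧ ∀ X ∈ S, ∀ Y ∈ S, ∀ (hX : X.Finite) (hY : Y.Finite),
    simpleQty hX.toFinset * simpleQty hY.toFinset ∈ schurSpan S

/-- `A` is an `S`-subset: a union of blocks of `S`. -/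
def IsSUnion {G : Type*} (S : Set (Set G)) (A : Set G) : Prop :=
  ∀ X ∈ S, X ⊆ A ∨ X ∩ A = ∅

set_option linter.unusedSectionVars false

section Aux
open Finset

instance instCoeFunMonoidAlgebraQ {G : Type*} :
    CoeFun (MonoidAlgebra ℚ G) (fun _ => G → ℚ) := ⟨fun z => z.coeff⟩

variable {G : Type*} [Mul G]

lemma simpleQty_apply [DecidableEq G] (X : Finset G) (g : G) :
    simpleQty X g = if g ∈ X then (1:ℚ) else 0 := by
  rw [simpleQty, MonoidAlgebra.coeff_sum, Finset.sum_apply']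
  simp [Finsupp.single_apply, Finset.sum_ite_eq X g (fun _ => (1:ℚ))]

lemma sq_mul_eq_sum (A B : Finset G) :
    simpleQty A * simpleQty B = ∑ a ∈ A, ∑ b ∈ B, MonoidAlgebra.single (a * b) (1:ℚ) := by
  rw [simpleQty, simpleQty, Finset.sum_mul_sum]
  simp [MonoidAlgebra.single_mul_single]

lemma sq_mul_apply [DecidableEq G] (A B : Finset G) (g : G) :
    (simpleQty A * simpleQty B) g
      = ∑ a ∈ A, ∑ b ∈ B, (if a * b = g then (1:ℚ) else 0) := by
  rw [sq_mul_eq_sum]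
  rw [MonoidAlgebra.coeff_sum, Finset.sum_apply']
  refine Finset.sum_congr rfl fun a _ => ?_
  rw [MonoidAlgebra.coeff_sum, Finset.sum_apply']
  refine Finset.sum_congr rfl fun b _ => ?_
  simp [Finsupp.single_apply]

lemma sq_mul_apply_nonneg [DecidableEq G] (A B : Finset G) (g : G) :
    0 ≤ (simpleQty A * simpleQty B) g := by
  rw [sq_mul_apply]
  refine Finset.sum_nonneg fun a _ => Finset.sum_nonneg fun b _ => ?_
  positivity

lemma sq_mul_apply_ge_one [DecidableEq G] {A B : Finset G} {a b : G} (ha : a ∈ A) (hb : b ∈ B) :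
    (1:ℚ) ≤ (simpleQty A * simpleQty B) (a * b) := by
  rw [sq_mul_apply]
  have h1 : (1:ℚ) ≤ ∑ b' ∈ B, (if a * b' = a * b then (1:ℚ) else 0) := by
    have := Finset.single_le_sum (f := fun b' => (if a * b' = a * b then (1:ℚ) else 0))
      (fun b' _ => by positivity) hb
    simpa using this
  refine le_trans h1 ?_
  exact Finset.single_le_sum (f := fun a' => ∑ b' ∈ B, (if a' * b' = a * b then (1:ℚ) else 0))
    (fun a' _ => Finset.sum_nonneg fun b' _ => by positivity) ha

lemma sq_mul_total [DecidableEq G] [Fintype G] (A B : Finset G) :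
    ∑ g : G, (simpleQty A * simpleQty B) g = (A.card : ℚ) * B.card := by
  simp only [sq_mul_apply]
  rw [Finset.sum_comm]
  have key : ∀ a ∈ A, ∑ g : G, ∑ b ∈ B, (if a * b = g then (1:ℚ) else 0) = B.card := by
    intro a _
    rw [Finset.sum_comm]
    have : ∀ b ∈ B, ∑ g : G, (if a * b = g then (1:ℚ) else 0) = 1 := by
      intro b _
      rw [Finset.sum_ite_eq Finset.univ (a*b) (fun _ => (1:ℚ))]
      simp
    rw [Finset.sum_congr rfl this]
    simp
  rw [Finset.sum_congr rfl key]
  simp [mul_comm]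

lemma blocks_eq {S : Set (Set G)} (hS : IsPartition S) {X Y : Set G} (hX : X ∈ S)
    (hY : Y ∈ S) {x : G} (hx : x ∈ X) (hy : x ∈ Y) : X = Y := by
  obtain ⟨Z, _, huniq⟩ := hS.2 x
  rw [huniq X ⟨hX, hx⟩, huniq Y ⟨hY, hy⟩]

lemma schurSpan_const {S : Set (Set G)} (hS : IsPartition S) {z : MonoidAlgebra ℚ G}
    (hz : z ∈ schurSpan S) {X : Set G} (hX : X ∈ S) {x y : G} (hx : x ∈ X) (hy : y ∈ X) :
    z x = z y := by
  classical
  induction hz using Submodule.span_induction with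
  | mem w hw =>
    obtain ⟨Y, hY, hYfin, rfl⟩ := hw
    rw [simpleQty_apply, simpleQty_apply]
    have hiff : x ∈ Y ↔ y ∈ Y := by
      constructor
      · intro h
        have := blocks_eq hS hY hX h hx
        rw [this] at h ⊢; exact hy
      · intro h
        have := blocks_eq hS hY hX h hy
        rw [this] at h ⊢; exact hx
    simp only [Set.Finite.mem_toFinset, hiff]
  | zero => rfl
  | add a b _ _ ha hb =>
    show (a + b) x = (a + b) y
    rw [MonoidAlgebra.coeff_add, Finsupp.add_apply, Finsupp.add_apply, ha, hb]
  | smul c a _ ha =>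
    show (c • a) x = (c • a) y
    rw [MonoidAlgebra.coeff_smul, Finsupp.smul_apply, Finsupp.smul_apply, ha]

lemma mem_schurSpan_of_const {S : Set (Set G)} (hS : IsPartition S)
    (z : MonoidAlgebra ℚ G)
    (hconst : ∀ X ∈ S, ∀ x ∈ X, ∀ y ∈ X, z x = z y) : z ∈ schurSpan S := by
  classical
  generalize hn : z.coeff.support.card = n
  induction n using Nat.strong_induction_on generalizing z with
  | _ n ih =>
    rcases eq_or_ne z 0 with rfl | hz0
    · exact zero_mem _
    · obtain ⟨x, hx⟩ := Finsupp.support_nonempty_iff.mpr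
        (fun h => hz0 (MonoidAlgebra.coeff_injective h))
      obtain ⟨X, ⟨hXS, hxX⟩, _⟩ := hS.2 x
      have hXfin : X.Finite := (hS.1 X hXS).2
      set c := z x with hc
      set w := z - c • simpleQty hXfin.toFinset with hw
      have hwapp : ∀ g, w g = z g - c * (if g ∈ X then (1:ℚ) else 0) := by
        intro g
        rw [hw, MonoidAlgebra.coeff_sub, Finsupp.sub_apply, MonoidAlgebra.coeff_smul,
            Finsupp.smul_apply, simpleQty_apply]
        simp [Set.Finite.mem_toFinset]
      have hXsub : hXfin.toFinset ⊆ z.coeff.support := by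
        intro g hg
        rw [Set.Finite.mem_toFinset] at hg
        rw [Finsupp.mem_support_iff]
        rw [hconst X hXS g hg x hxX]
        exact Finsupp.mem_support_iff.mp hx
      have hwsupp : w.coeff.support ⊆ z.coeff.support \ hXfin.toFinset := by
        intro g hg
        rw [Finsupp.mem_support_iff] at hg
        rw [Finset.mem_sdiff]
        constructor
        · rw [Finsupp.mem_support_iff]
          intro h0
          apply hg
          rw [hwapp g, h0]
          by_cases hgX : g ∈ X
          · simp only [hgX, if_pos]
            have : z g = c := hconst X hXS g hgX x hxX
            rw [← this, h0]; ring
          · simp [hgX]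
        · rw [Set.Finite.mem_toFinset]
          intro hgX
          apply hg
          rw [hwapp g, if_pos hgX, hconst X hXS g hgX x hxX]
          ring
      have hcard : w.coeff.support.card < n := by
        rw [← hn]
        calc w.coeff.support.card ≤ (z.coeff.support \ hXfin.toFinset).card := Finset.card_le_card hwsupp
          _ < z.coeff.support.card := by
            rw [Finset.card_sdiff_of_subset hXsub]
            have hpos : 0 < hXfin.toFinset.card := by
              rw [Finset.card_pos, Set.Finite.toFinset_nonempty]
              exact (hS.1 X hXS).1
            have hle : hXfin.toFinset.card ≤ z.coeff.support.card := Finset.card_le_card hXsub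
            omega
      have hwconst : ∀ Y ∈ S, ∀ u ∈ Y, ∀ v ∈ Y, w u = w v := by
        intro Y hY u hu v hv
        rw [hwapp u, hwapp v, hconst Y hY u hu v hv]
        have : u ∈ X ↔ v ∈ X := by
          constructor
          · intro h; have e := blocks_eq hS hXS hY h hu; rw [e]; exact hv
          · intro h; have e := blocks_eq hS hXS hY h hv; rw [e]; exact hu
        rw [if_congr this rfl rfl]
      have hwmem : w ∈ schurSpan S := ih _ hcard w hwconst rfl
      have : z = w + c • simpleQty hXfin.toFinset := by rw [hw]; abel
      rw [this]
      exact add_mem hwmem (Submodule.smul_mem _ _ (Submodule.subset_span ⟨X, hXS, hXfin, rfl⟩))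

end Aux

section OG
open Finset
open scoped Classical
variable {K : Type*} [Semigroup K] {H : Subsemigroup K} {θ : K}

lemma decompO (hO : ∀ x : K, x ∉ H → ∀ y : K, x * y = θ)
    {A : Finset K} (hA : ∀ a ∈ A, a ∉ H) (B : Finset K) :
    simpleQty A * simpleQty B = ((A.card * B.card : ℕ) : ℚ) • MonoidAlgebra.single θ (1:ℚ) := by
  rw [sq_mul_eq_sum]
  have : ∀ a ∈ A, ∑ b ∈ B, MonoidAlgebra.single (a * b) (1:ℚ)
      = (B.card : ℚ) • MonoidAlgebra.single θ (1:ℚ) := by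
    intro a ha
    rw [Finset.sum_congr rfl fun b _ => by rw [hO a (hA a ha) b]]
    rw [Finset.sum_const, ← Nat.cast_smul_eq_nsmul ℚ]
  rw [Finset.sum_congr rfl this, Finset.sum_const, ← Nat.cast_smul_eq_nsmul ℚ, smul_smul]
  push_cast
  ring_nf

lemma decompHO (hHO : ∀ h ∈ H, ∀ x : K, x ∉ H → h * x = x)
    {A B : Finset K} (hA : ∀ a ∈ A, a ∈ H) (hB : ∀ b ∈ B, b ∉ H) :
    simpleQty A * simpleQty B = (A.card : ℚ) • simpleQty B := by
  rw [sq_mul_eq_sum]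
  have : ∀ a ∈ A, ∑ b ∈ B, MonoidAlgebra.single (a * b) (1:ℚ) = simpleQty B := by
    intro a ha
    rw [simpleQty, Finset.sum_congr rfl fun b hb => by rw [hHO a (hA a ha) b (hB b hb)]]
  rw [Finset.sum_congr rfl this, Finset.sum_const, ← Nat.cast_smul_eq_nsmul ℚ]

lemma sq_split (H' : Subsemigroup K) (A : Finset K) :
    simpleQty A = simpleQty (A.filter (fun a => a ∉ H')) + simpleQty (A.filter (fun a => a ∈ H')) := by
  rw [simpleQty, simpleQty, simpleQty, ← Finset.sum_filter_add_sum_filter_not A (fun a => a ∉ H')]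
  congr 1
  exact (Finset.sum_congr (Finset.filter_congr fun x _ => by simp) fun _ _ => rfl)

lemma sq_decomp (hO : ∀ x : K, x ∉ H → ∀ y : K, x * y = θ)
    (hHO : ∀ h ∈ H, ∀ x : K, x ∉ H → h * x = x) (A B : Finset K) :
    simpleQty A * simpleQty B
      = (((A.filter (fun a => a ∉ H)).card * B.card : ℕ) : ℚ) • MonoidAlgebra.single θ (1:ℚ)
        + ((A.filter (fun a => a ∈ H)).card : ℚ) • simpleQty (B.filter (fun b => b ∉ H))
        + simpleQty (A.filter (fun a => a ∈ H)) * simpleQty (B.filter (fun b => b ∈ H)) := by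
  calc simpleQty A * simpleQty B
      = simpleQty (A.filter (fun a => a ∉ H)) * simpleQty B
        + (simpleQty (A.filter (fun a => a ∈ H)) * simpleQty (B.filter (fun b => b ∉ H))
          + simpleQty (A.filter (fun a => a ∈ H)) * simpleQty (B.filter (fun b => b ∈ H))) := by
        rw [sq_split H A, sq_split H B]; noncomm_ring
    _ = _ := by
        rw [decompO hO (fun a ha => (Finset.mem_filter.mp ha).2) B,
          decompHO hHO (fun a ha => (Finset.mem_filter.mp ha).2)
            (fun b hb => (Finset.mem_filter.mp hb).2)]
        rw [add_assoc]

lemma sq_mul_H_apply_notH {A B : Finset K} (hA : ∀ a ∈ A, a ∈ H) (hB : ∀ b ∈ B, b ∈ H)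
    {g : K} (hg : g ∉ H) : (simpleQty A * simpleQty B) g = 0 := by
  rw [sq_mul_eq_sum]
  rw [MonoidAlgebra.coeff_sum, Finset.sum_apply']
  refine Finset.sum_eq_zero fun a ha => ?_
  rw [MonoidAlgebra.coeff_sum, Finset.sum_apply']
  refine Finset.sum_eq_zero fun b hb => ?_
  rw [MonoidAlgebra.coeff_single, Finsupp.single_apply, if_neg]
  intro hctr
  exact hg (hctr ▸ H.mul_mem (hA a ha) (hB b hb))

lemma sq_mul_single_H (hperm : ∀ h ∈ H, Set.BijOn (· * h) (H : Set K) (H : Set K))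
    {A : Finset K} (hA : ∀ a ∈ A, a ∈ H) {h : K} (hh : h ∈ H) :
    simpleQty A * MonoidAlgebra.single h (1:ℚ) = simpleQty (A.image (· * h)) := by
  rw [simpleQty, Finset.sum_mul]
  simp only [MonoidAlgebra.single_mul_single, one_mul]
  rw [simpleQty, Finset.sum_image]
  intro a ha b hb hab
  exact (hperm h hh).injOn (hA a ha) (hA b hb) hab

lemma sq_H_mul_H (hperm : ∀ h ∈ H, Set.BijOn (· * h) (H : Set K) (H : Set K))
    {A B : Finset K} (hA : ∀ a ∈ A, a ∈ H) (hB : ∀ b ∈ B, b ∈ H)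
    (hAfull : ∀ a : K, a ∈ H → a ∈ A) :
    simpleQty A * simpleQty B = (B.card : ℚ) • simpleQty A := by
  have : simpleQty B = ∑ b ∈ B, MonoidAlgebra.single b (1:ℚ) := rfl
  rw [this, Finset.mul_sum]
  have key : ∀ b ∈ B, simpleQty A * MonoidAlgebra.single b (1:ℚ) = simpleQty A := by
    intro b hb
    rw [sq_mul_single_H hperm hA (hB b hb)]
    congr 1
    ext x
    simp only [Finset.mem_image]
    constructor
    · rintro ⟨a, ha, rfl⟩; exact hAfull _ (H.mul_mem (hA a ha) (hB b hb))
    · intro hx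
      obtain ⟨a, haH, ha⟩ := (hperm b (hB b hb)).surjOn (hA x hx : x ∈ (H : Set K))
      exact ⟨a, hAfull a haH, ha⟩
  rw [Finset.sum_congr rfl key, Finset.sum_const, ← Nat.cast_smul_eq_nsmul ℚ]

end OG

section MapD
open scoped Classical
variable {G G' : Type*} [Mul G] [Mul G']

lemma mapDomain_simpleQty {f : G → G'} (hf : Function.Injective f) (A : Finset G) :
    MonoidAlgebra.mapDomain f (simpleQty A) = simpleQty (A.image f) := by
  rw [simpleQty, simpleQty, Finset.sum_image (fun a _ b _ hab => hf hab)]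
  ext g
  simp [Finsupp.mapDomain_finset_sum]

end MapD

section Pre2
open scoped Classical
variable {K : Type*} [Semigroup K] [Fintype K] {H : Subsemigroup K}

lemma preimage_image_finset {X : Set K} (hXH : X ⊆ (H : Set K))
    (hfin : (Subtype.val ⁻¹' X : Set ↥H).Finite) (hXfin : X.Finite) :
    hfin.toFinset.image (Subtype.val : ↥H → K) = hXfin.toFinset := by
  ext g
  simp only [Finset.mem_image, Set.Finite.mem_toFinset, Set.mem_preimage]
  constructor
  · rintro ⟨a, ha, rfl⟩; exact ha
  · intro hg; exact ⟨⟨g, hXH hg⟩, hg, rfl⟩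

lemma mapDomain_sq_preimage {X : Set K} (hXH : X ⊆ (H : Set K))
    (hfin : (Subtype.val ⁻¹' X : Set ↥H).Finite) (hXfin : X.Finite) :
    MonoidAlgebra.mapDomain (Subtype.val : ↥H → K) (simpleQty hfin.toFinset)
      = simpleQty hXfin.toFinset := by
  rw [mapDomain_simpleQty Subtype.val_injective, preimage_image_finset hXH hfin hXfin]

lemma mapDomain_sq_preimage' {X : Set K} (hXH : X ⊆ (H : Set K))
    (hfin : (Subtype.val ⁻¹' X : Set ↥H).Finite) (hXfin : X.Finite) :
    MonoidAlgebra.mapDomain (Subtype.val : ↥H → K) (simpleQty hfin.toFinset)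
      = simpleQty hXfin.toFinset :=
  mapDomain_sq_preimage hXH hfin hXfin

end Pre2

/-- characterization of Schur rings over the semigroup `OG_n = O ∪ H`,
where every element of `O = Hᶜ` is a left zero onto `θ`, elements of `H` act as left
identities on `O`, and right multiplication by elements of `H` permutes `H`. -/
theorem og_schur {K : Type*} [Semigroup K] [Fintype K]
    (H : Subsemigroup K) (θ : K) (hθ : θ ∉ H)
    (hO : ∀ x : K, x ∉ H → ∀ y : K, x * y = θ)
    (hHO : ∀ h ∈ H, ∀ x : K, x ∉ H → h * x = x)
    (hperm : ∀ h ∈ H, Set.BijOn (· * h) (H : Set K) (H : Set K))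
    (S : Set (Set K)) (hS : IsPartition S) :
    IsSchurRing S ↔
      (((∀ X ∈ S, X ⊆ ((H : Set K)ᶜ) ∨ X ⊆ (H : Set K)) ∧ ({θ} : Set K) ∈ S ∧
          IsSchurRing { B : Set H | ∃ X ∈ S, X ⊆ (H : Set K) ∧ B = Subtype.val ⁻¹' X }) ∨
        (({θ} : Set K) ∈ S ∧ ∃ X ∈ S, (H : Set K) ⊆ X)) := by
  classical
  constructor
  · intro hSR
    -- Step 1: the block containing θ is {θ}
    have key1 : ∀ T ∈ S, θ ∈ T → T = {θ} := by
      intro T hTS hθT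
      have hTfin : T.Finite := Set.toFinite T
      set Tf := hTfin.toFinset with hTfdef
      have hmem : ∀ g : K, g ∈ Tf ↔ g ∈ T := fun g => Set.Finite.mem_toFinset _
      have hz : simpleQty Tf * simpleQty Tf ∈ schurSpan S := hSR.2 T hTS T hTS hTfin hTfin
      have hdec := sq_decomp (θ := θ) hO hHO Tf Tf
      set A1 := Tf.filter (fun a => a ∉ H) with hA1def
      set A2 := Tf.filter (fun a => a ∈ H) with hA2def
      have hA2H : ∀ a ∈ A2, a ∈ H := fun a ha => (Finset.mem_filter.mp ha).2
      have hθA1 : θ ∈ A1 := Finset.mem_filter.mpr ⟨(hmem θ).mpr hθT, hθ⟩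
      have happly : ∀ g : K, (simpleQty Tf * simpleQty Tf) g
          = ((A1.card * Tf.card : ℕ) : ℚ) * (if θ = g then (1:ℚ) else 0)
            + (A2.card : ℚ) * (if g ∈ A1 then (1:ℚ) else 0)
            + (simpleQty A2 * simpleQty A2) g := by
        intro g
        rw [hdec, MonoidAlgebra.coeff_add, MonoidAlgebra.coeff_add, Finsupp.add_apply,
            Finsupp.add_apply, MonoidAlgebra.coeff_smul, MonoidAlgebra.coeff_smul,
            Finsupp.smul_apply, Finsupp.smul_apply, MonoidAlgebra.coeff_single,
          Finsupp.single_apply, simpleQty_apply, smul_eq_mul, smul_eq_mul]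
      have hzθ : (simpleQty Tf * simpleQty Tf) θ = ((A1.card * Tf.card : ℕ) : ℚ) + A2.card := by
        rw [happly θ, if_pos rfl, if_pos hθA1, sq_mul_H_apply_notH hA2H hA2H hθ]
        ring
      have hA1card : 1 ≤ A1.card := Finset.card_pos.mpr ⟨θ, hθA1⟩
      have hTfcard : 1 ≤ Tf.card := Finset.card_pos.mpr ⟨θ, (hmem θ).mpr hθT⟩
      have hA2empty : A2 = ∅ := by
        by_contra hne
        have hA2ne : A2.Nonempty := Finset.nonempty_iff_ne_empty.mpr hne
        have hvals : ∀ x ∈ A2, (simpleQty A2 * simpleQty A2) x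
            = ((A1.card * Tf.card : ℕ) : ℚ) + A2.card := by
          intro x hx
          have hxH : x ∈ H := (Finset.mem_filter.mp hx).2
          have hxT : x ∈ T := (hmem x).mp (Finset.mem_filter.mp hx).1
          have h1 : (simpleQty Tf * simpleQty Tf) x = (simpleQty A2 * simpleQty A2) x := by
            rw [happly x, if_neg (show ¬ θ = x by rintro rfl; exact hθ hxH),
              if_neg (fun hc : x ∈ A1 => (Finset.mem_filter.mp hc).2 hxH)]
            ring
          rw [← h1, schurSpan_const hS hz hTS hxT hθT, hzθ]
        have hsum : (A2.card : ℚ) * (((A1.card * Tf.card : ℕ) : ℚ) + A2.card)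
            ≤ (A2.card : ℚ) * A2.card := by
          calc (A2.card : ℚ) * (((A1.card * Tf.card : ℕ) : ℚ) + A2.card)
              = ∑ x ∈ A2, (simpleQty A2 * simpleQty A2) x := by
                rw [Finset.sum_congr rfl hvals, Finset.sum_const, ← Nat.cast_smul_eq_nsmul ℚ,
                  smul_eq_mul]
            _ ≤ ∑ g : K, (simpleQty A2 * simpleQty A2) g :=
                Finset.sum_le_sum_of_subset_of_nonneg (Finset.subset_univ A2)
                  (fun g _ _ => sq_mul_apply_nonneg A2 A2 g)
            _ = (A2.card : ℚ) * A2.card := sq_mul_total A2 A2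
        have hm : 1 ≤ A2.card := Finset.card_pos.mpr hA2ne
        have h1 : (1:ℚ) ≤ (A1.card : ℚ) := by exact_mod_cast hA1card
        have h2 : (1:ℚ) ≤ (Tf.card : ℚ) := by exact_mod_cast hTfcard
        have h3 : (1:ℚ) ≤ (A2.card : ℚ) := by exact_mod_cast hm
        push_cast at hsum
        have hmpos : (0:ℚ) < A2.card := lt_of_lt_of_le zero_lt_one h3
        have hkey := le_of_mul_le_mul_left hsum hmpos
        nlinarith [mul_le_mul h1 h2 zero_le_one (le_trans zero_le_one h1)]
      apply Set.Subset.antisymm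
      · intro x hxT
        by_contra hxθ
        rw [Set.mem_singleton_iff] at hxθ
        have hx0 : (simpleQty Tf * simpleQty Tf) x = 0 := by
          rw [happly x, hA2empty, if_neg (fun h => hxθ h.symm)]
          simp [simpleQty]
        have hcst := schurSpan_const hS hz hTS hxT hθT
        rw [hx0, hzθ] at hcst
        have hge : (1:ℚ) ≤ ((A1.card * Tf.card : ℕ) : ℚ) := by
          exact_mod_cast Nat.one_le_iff_ne_zero.mpr
            (Nat.mul_ne_zero (by omega) (by omega))
        simp only [hA2empty, Finset.card_empty, Nat.cast_zero, add_zero] at hcst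
        linarith
      · intro x hx
        rw [Set.mem_singleton_iff] at hx
        rw [hx]; exact hθT
    have hθS : ({θ} : Set K) ∈ S := by
      obtain ⟨T, ⟨hTS, hθT⟩, _⟩ := hS.2 θ
      rw [← key1 T hTS hθT]; exact hTS
    -- Step 2: a mixed block contains all of H
    have key2 : ∀ X ∈ S, ∀ x₀, x₀ ∈ X → x₀ ∈ H → (∃ o ∈ X, o ∉ H) → (H : Set K) ⊆ X := by
      rintro X hXS x₀ hx₀X hx₀H ⟨o, hoX, hoH⟩
      have hθX : θ ∉ X := by
        intro hθX
        have hXsingl := key1 X hXS hθX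
        rw [hXsingl, Set.mem_singleton_iff] at hx₀X
        exact hθ (hx₀X ▸ hx₀H)
      have hXfin : X.Finite := Set.toFinite X
      set Xf := hXfin.toFinset with hXfdef
      have hmemX : ∀ g : K, g ∈ Xf ↔ g ∈ X := fun g => Set.Finite.mem_toFinset _
      set B1 := Xf.filter (fun a => a ∉ H) with hB1def
      set B2 := Xf.filter (fun a => a ∈ H) with hB2def
      have hB2H : ∀ a ∈ B2, a ∈ H := fun a ha => (Finset.mem_filter.mp ha).2
      have hoB1 : o ∈ B1 := Finset.mem_filter.mpr ⟨(hmemX o).mpr hoX, hoH⟩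
      have hx₀B2 : x₀ ∈ B2 := Finset.mem_filter.mpr ⟨(hmemX x₀).mpr hx₀X, hx₀H⟩
      have hstep : ∀ y, y ∈ H → y * x₀ ∈ X := by
        intro y hyH
        obtain ⟨Y, ⟨hYS, hyY⟩, _⟩ := hS.2 y
        have hYfin : Y.Finite := Set.toFinite Y
        set Yf := hYfin.toFinset with hYfdef
        have hmemY : ∀ g : K, g ∈ Yf ↔ g ∈ Y := fun g => Set.Finite.mem_toFinset _
        set A2 := Yf.filter (fun a => a ∈ H) with hA2def
        have hA2H : ∀ a ∈ A2, a ∈ H := fun a ha => (Finset.mem_filter.mp ha).2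
        have hyA2 : y ∈ A2 := Finset.mem_filter.mpr ⟨(hmemY y).mpr hyY, hyH⟩
        have hz : simpleQty Yf * simpleQty Xf ∈ schurSpan S := hSR.2 Y hYS X hXS hYfin hXfin
        have hdec := sq_decomp (θ := θ) hO hHO Yf Xf
        have happly : ∀ g : K, (simpleQty Yf * simpleQty Xf) g
            = (((Yf.filter (fun a => a ∉ H)).card * Xf.card : ℕ) : ℚ) * (if θ = g then (1:ℚ) else 0)
              + (A2.card : ℚ) * (if g ∈ B1 then (1:ℚ) else 0)
              + (simpleQty A2 * simpleQty B2) g := by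
          intro g
          rw [hdec, MonoidAlgebra.coeff_add, MonoidAlgebra.coeff_add, Finsupp.add_apply,
            Finsupp.add_apply, MonoidAlgebra.coeff_smul, MonoidAlgebra.coeff_smul,
            Finsupp.smul_apply, Finsupp.smul_apply, MonoidAlgebra.coeff_single,
            Finsupp.single_apply, simpleQty_apply, smul_eq_mul, smul_eq_mul]
        have hzo : (simpleQty Yf * simpleQty Xf) o = (A2.card : ℚ) := by
          rw [happly o, if_neg (show ¬ θ = o from fun h => hθX (by rw [h]; exact hoX)), if_pos hoB1,
            sq_mul_H_apply_notH hA2H hB2H hoH]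
          ring
        have hvals : ∀ x ∈ B2, (simpleQty A2 * simpleQty B2) x = (A2.card : ℚ) := by
          intro x hx
          have hxH : x ∈ H := (Finset.mem_filter.mp hx).2
          have hxX : x ∈ X := (hmemX x).mp (Finset.mem_filter.mp hx).1
          have h1 : (simpleQty Yf * simpleQty Xf) x = (simpleQty A2 * simpleQty B2) x := by
            rw [happly x, if_neg (show ¬ θ = x by rintro rfl; exact hθ hxH),
              if_neg (fun hc : x ∈ B1 => (Finset.mem_filter.mp hc).2 hxH)]
            ring
          rw [← h1, schurSpan_const hS hz hXS hxX hoX, hzo]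
        have hvanish : ∀ g, g ∉ B2 → (simpleQty A2 * simpleQty B2) g = 0 := by
          have hsum : ∑ x ∈ B2, (simpleQty A2 * simpleQty B2) x = (A2.card : ℚ) * B2.card := by
            rw [Finset.sum_congr rfl hvals, Finset.sum_const, ← Nat.cast_smul_eq_nsmul ℚ, smul_eq_mul]
            ring
          have htot := sq_mul_total A2 B2
          have hzero : ∑ g ∈ Finset.univ \ B2, (simpleQty A2 * simpleQty B2) g = 0 := by
            have hsplitsum := Finset.sum_sdiff (f := fun g => (simpleQty A2 * simpleQty B2) g)
              (Finset.subset_univ B2)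
            rw [hsum, htot] at hsplitsum
            linarith
          intro g hg
          exact (Finset.sum_eq_zero_iff_of_nonneg
            (fun g _ => sq_mul_apply_nonneg A2 B2 g)).mp hzero g
            (Finset.mem_sdiff.mpr ⟨Finset.mem_univ g, hg⟩)
        have hmemB2 : y * x₀ ∈ B2 := by
          by_contra hc
          have h1 := sq_mul_apply_ge_one (A := A2) (B := B2) hyA2 hx₀B2
          rw [hvanish _ hc] at h1
          linarith
        exact (hmemX _).mp (Finset.mem_filter.mp hmemB2).1
      intro h' hh'
      obtain ⟨y, hyH, hyx⟩ := (hperm x₀ hx₀H).surjOn hh'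
      have := hstep y hyH
      rwa [show y * x₀ = h' from hyx] at this
    by_cases hsplit : ∀ X ∈ S, X ⊆ ((H : Set K)ᶜ) ∨ X ⊆ (H : Set K)
    · left
      refine ⟨hsplit, hθS, ?_⟩
      have hS'part : IsPartition { B : Set ↥H | ∃ X ∈ S, X ⊆ (H : Set K) ∧ B = Subtype.val ⁻¹' X } := by
        constructor
        · rintro B ⟨X, hXS, hXH, rfl⟩
          obtain ⟨x, hx⟩ := (hS.1 X hXS).1
          exact ⟨⟨⟨x, hXH hx⟩, hx⟩, Set.toFinite _⟩
        · intro h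
          obtain ⟨X, ⟨hXS, hhX⟩, _⟩ := hS.2 (h : K)
          have hXH : X ⊆ (H : Set K) := by
            rcases hsplit X hXS with hc | hc
            · exact absurd (hc hhX) (by simp)
            · exact hc
          refine ⟨Subtype.val ⁻¹' X, ⟨⟨X, hXS, hXH, rfl⟩, hhX⟩, ?_⟩
          rintro B ⟨⟨X', hX'S, hX'H, rfl⟩, hhB⟩
          rw [blocks_eq hS hX'S hXS hhB hhX]
      refine ⟨hS'part, ?_⟩
      intro B hB C hC hBfin hCfin
      obtain ⟨X, hXS, hXH, rfl⟩ := hB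
      obtain ⟨Y, hYS, hYH, rfl⟩ := hC
      have hXfin : X.Finite := Set.toFinite X
      have hYfin : Y.Finite := Set.toFinite Y
      have hzmem : simpleQty hXfin.toFinset * simpleQty hYfin.toFinset ∈ schurSpan S :=
        hSR.2 X hXS Y hYS hXfin hYfin
      have hwmap : MonoidAlgebra.mapDomain (Subtype.val : ↥H → K)
          (simpleQty hBfin.toFinset * simpleQty hCfin.toFinset)
          = simpleQty hXfin.toFinset * simpleQty hYfin.toFinset := by
        have h2 := MonoidAlgebra.mapDomain_mul (R := ℚ) (MulMemClass.subtype H)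
          (simpleQty hBfin.toFinset) (simpleQty hCfin.toFinset)
        rw [MulMemClass.coe_subtype] at h2
        refine Eq.trans h2 ?_
        rw [mapDomain_sq_preimage' hXH hBfin hXfin, mapDomain_sq_preimage' hYH hCfin hYfin]
      apply mem_schurSpan_of_const hS'part
      intro D hD u hu v hv
      obtain ⟨Z, hZS, hZH, rfl⟩ := hD
      have happ : ∀ t : ↥H, (simpleQty hBfin.toFinset * simpleQty hCfin.toFinset) t
          = (simpleQty hXfin.toFinset * simpleQty hYfin.toFinset) (t : K) := by
        intro t
        rw [← hwmap]
        exact (Finsupp.mapDomain_apply Subtype.val_injective _ t).symm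
      rw [happ u, happ v]
      exact schurSpan_const hS hzmem hZS hu hv
    · right
      refine ⟨hθS, ?_⟩
      push_neg at hsplit
      obtain ⟨X, hXS, hX1, hX2⟩ := hsplit
      obtain ⟨x₀, hx₀X, hx₀H⟩ : ∃ x₀ ∈ X, x₀ ∈ H := by
        obtain ⟨x, hx, hx'⟩ := Set.not_subset.mp hX1
        exact ⟨x, hx, by simpa using hx'⟩
      obtain ⟨o, hoX, hoH⟩ := Set.not_subset.mp hX2
      exact ⟨X, hXS, key2 X hXS x₀ hx₀X hx₀H ⟨o, hoX, hoH⟩⟩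
  · intro hcase
    refine ⟨hS, ?_⟩
    have hθS : ({θ} : Set K) ∈ S := by
      rcases hcase with ⟨_, h, _⟩ | ⟨h, _⟩ <;> exact h
    have hsingle : MonoidAlgebra.single θ (1:ℚ)
        = simpleQty (Set.toFinite ({θ} : Set K)).toFinset := by
      rw [Set.Finite.toFinset_singleton]
      simp [simpleQty]
    have hgenθ : MonoidAlgebra.single θ (1:ℚ) ∈ schurSpan S := by
      rw [hsingle]; exact Submodule.subset_span ⟨{θ}, hθS, Set.toFinite _, rfl⟩
    have hgen : ∀ X ∈ S, ∀ hX : X.Finite, simpleQty hX.toFinset ∈ schurSpan S :=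
      fun X hX hXf => Submodule.subset_span ⟨X, hX, hXf, rfl⟩
    rcases hcase with ⟨hsplit, hθS', hsub⟩ | ⟨hθS', X₀, hX₀S, hHX₀⟩
    · intro X hXS Y hYS hXfin hYfin
      rcases hsplit X hXS with hXO | hXH
      · rw [decompO hO (fun a ha => hXO (hXfin.mem_toFinset.mp ha)) hYfin.toFinset]
        exact Submodule.smul_mem _ _ hgenθ
      · rcases hsplit Y hYS with hYO | hYH
        · rw [decompHO hHO (fun a ha => hXH (hXfin.mem_toFinset.mp ha))
            (fun b hb => hYO (hYfin.mem_toFinset.mp hb))]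
          exact Submodule.smul_mem _ _ (hgen Y hYS hYfin)
        · set S' := { B : Set ↥H | ∃ X ∈ S, X ⊆ (H : Set K) ∧ B = Subtype.val ⁻¹' X } with hS'def
          have hBmem : (Subtype.val ⁻¹' X : Set ↥H) ∈ S' := ⟨X, hXS, hXH, rfl⟩
          have hCmem : (Subtype.val ⁻¹' Y : Set ↥H) ∈ S' := ⟨Y, hYS, hYH, rfl⟩
          have hw := hsub.2 _ hBmem _ hCmem (Set.toFinite _) (Set.toFinite _)
          have himg : ∀ w ∈ schurSpan S',
              MonoidAlgebra.mapDomain (Subtype.val : ↥H → K) w ∈ schurSpan S := by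
            intro w hw
            induction hw using Submodule.span_induction with
            | mem gen hgen' =>
              obtain ⟨D, hD, hDfin, rfl⟩ := hgen'
              obtain ⟨Z, hZS, hZH, rfl⟩ := hD
              rw [mapDomain_sq_preimage hZH hDfin (Set.toFinite Z)]
              exact hgen Z hZS (Set.toFinite Z)
            | zero => rw [MonoidAlgebra.mapDomain_zero]; exact zero_mem _
            | add a b _ _ ha hb => rw [MonoidAlgebra.mapDomain_add]; exact add_mem ha hb
            | smul c a _ ha => rw [MonoidAlgebra.mapDomain_smul]; exact Submodule.smul_mem _ _ ha
          have hmap2 : MonoidAlgebra.mapDomain (Subtype.val : ↥H → K)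
              (simpleQty (Set.toFinite (Subtype.val ⁻¹' X : Set ↥H)).toFinset
                * simpleQty (Set.toFinite (Subtype.val ⁻¹' Y : Set ↥H)).toFinset)
              = simpleQty hXfin.toFinset * simpleQty hYfin.toFinset := by
            have h2 := MonoidAlgebra.mapDomain_mul (R := ℚ) (MulMemClass.subtype H)
              (simpleQty (Set.toFinite (Subtype.val ⁻¹' X : Set ↥H)).toFinset)
              (simpleQty (Set.toFinite (Subtype.val ⁻¹' Y : Set ↥H)).toFinset)
            rw [MulMemClass.coe_subtype] at h2
            refine Eq.trans h2 ?_
            rw [mapDomain_sq_preimage' hXH _ hXfin, mapDomain_sq_preimage' hYH _ hYfin]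
          rw [← hmap2]
          exact himg _ hw
    · intro X hXS Y hYS hXfin hYfin
      by_cases hXeq : X = X₀
      · have hHX : (H : Set K) ⊆ X := by rw [hXeq]; exact hHX₀
        by_cases hYeq : Y = X₀
        · have hHY : (H : Set K) ⊆ Y := by rw [hYeq]; exact hHX₀
          have hB2XH : ∀ a ∈ hXfin.toFinset.filter (fun a => a ∈ H), a ∈ H :=
            fun a ha => (Finset.mem_filter.mp ha).2
          have hB2YH : ∀ a ∈ hYfin.toFinset.filter (fun b => b ∈ H), a ∈ H :=
            fun a ha => (Finset.mem_filter.mp ha).2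
          have hB2Xfull : ∀ a : K, a ∈ H → a ∈ hXfin.toFinset.filter (fun a => a ∈ H) :=
            fun a ha => Finset.mem_filter.mpr ⟨hXfin.mem_toFinset.mpr (hHX ha), ha⟩
          have hBB : hXfin.toFinset.filter (fun a => a ∈ H)
              = hYfin.toFinset.filter (fun b => b ∈ H) := by
            ext a
            simp only [Finset.mem_filter, Set.Finite.mem_toFinset]
            constructor
            · rintro ⟨_, ha⟩; exact ⟨hHY ha, ha⟩
            · rintro ⟨_, ha⟩; exact ⟨hHX ha, ha⟩
          rw [sq_decomp (θ := θ) hO hHO, sq_H_mul_H hperm hB2XH hB2YH hB2Xfull, hBB]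
          rw [add_assoc, ← smul_add, ← sq_split H hYfin.toFinset]
          exact add_mem (Submodule.smul_mem _ _ hgenθ)
            (Submodule.smul_mem _ _ (hgen Y hYS hYfin))
        · have hYO : ∀ b ∈ Y, b ∉ H := by
            intro b hb hbH
            exact hYeq (blocks_eq hS hYS hX₀S hb (hHX₀ hbH))
          rw [sq_decomp (θ := θ) hO hHO]
          have h3 : hYfin.toFinset.filter (fun b => b ∈ H) = ∅ :=
            Finset.filter_false_of_mem (fun b hb => hYO b (hYfin.mem_toFinset.mp hb))
          have h2 : hYfin.toFinset.filter (fun b => b ∉ H) = hYfin.toFinset :=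
            Finset.filter_true_of_mem (fun b hb => hYO b (hYfin.mem_toFinset.mp hb))
          rw [h3, h2, show simpleQty (∅ : Finset K) = 0 from by simp [simpleQty], mul_zero]
          exact add_mem (add_mem (Submodule.smul_mem _ _ hgenθ)
            (Submodule.smul_mem _ _ (hgen Y hYS hYfin))) (zero_mem _)
      · have hXO : ∀ a ∈ hXfin.toFinset, a ∉ H :=
          fun a ha haH => hXeq (blocks_eq hS hXS hX₀S (hXfin.mem_toFinset.mp ha) (hHX₀ haH))
        rw [decompO hO hXO hYfin.toFinset]
        exact Submodule.smul_mem _ _ hgenθ
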